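/- Let (π_n)_{n≥0} be any enumeration of all nonempty finite words over {0,1} with π₀ = 0, let ρ = π₀π₁π₂⋯ be their concatenation, and let W be the set of all sequences in {0,1}^ω starting with 0 except the single sequence ρ. In the Banach–Mazur game (G_{0,1}, 0, W), Player 0 has a 1-bounded winning strategy, but Player 0 has no move-counting winning strategy. -/

import Mathlib

open MeasureTheory
open scoped ENNReal NNReal

namespace BMGame

variable {V : Type*}

/-- The prefix of length `n` of the infinite sequence `ρ`. -/
def pref (ρ : ℕ → V) (n : ℕ) : List V := (List.range n).map ρ

/-- `ρ` is an infinite path of the graph `E` starting at `v₀`. -/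
def IsPlay (E : V → V → Prop) (v₀ : V) (ρ : ℕ → V) : Prop :=
  ρ 0 = v₀ ∧ ∀ n, E (ρ n) (ρ (n + 1))

/-- `π` is a nonempty finite path of the graph `E` starting at `v₀` (a position of the game). -/
def IsPos (E : V → V → Prop) (v₀ : V) (π : List V) : Prop :=
  π.head? = some v₀ ∧ π.Chain' E

/-- A strategy for player 0 assigns to each position the (nonempty) block of vertices
appended by player 0's move; `(π ++ f π).Chain' E` says that this block is a path
starting at the last vertex of `π`. -/
def IsStrategy (E : V → V → Prop) (v₀ : V) (f : List V → List V) : Prop :=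
  ∀ π, IsPos E v₀ π → f π ≠ [] ∧ (π ++ f π).Chain' E

/-- The play `ρ` is consistent with the strategy `f`: there are cut points
`c 0, c 1, …` (the lengths of the prefixes built after each move of player 1) such that
after each such prefix player 0 plays according to `f`, and player 1 then appends a
nonempty block. -/
def ConsGen (f : List V → List V) (ρ : ℕ → V) : Prop :=
  ∃ c : ℕ → ℕ, 1 ≤ c 0 ∧ ∀ i,
    pref ρ (c i + (f (pref ρ (c i))).length) = pref ρ (c i) ++ f (pref ρ (c i)) ∧
    c i + (f (pref ρ (c i))).length < c (i + 1)

/-- `f` is a winning strategy for player 0 in the Banach–Mazur game `(E, v₀, W)`. -/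
def WinningStrategy (E : V → V → Prop) (v₀ : V) (W : Set (ℕ → V))
    (f : List V → List V) : Prop :=
  IsStrategy E v₀ f ∧ ∀ ρ, IsPlay E v₀ ρ → ConsGen f ρ → ρ ∈ W

/-- The strategy `f` is `b`-bounded: each of its moves has length at most `b`. -/
def BoundedBy (E : V → V → Prop) (v₀ : V) (b : ℕ) (f : List V → List V) : Prop :=
  ∀ π, IsPos E v₀ π → (f π).length ≤ b

/-- A positional strategy assigns to each vertex the nonempty block appended. -/
def IsPositional (E : V → V → Prop) (f : V → List V) : Prop :=
  ∀ v, f v ≠ [] ∧ (v :: f v).Chain' E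

/-- Consistency with a positional strategy: after each prefix chosen by player 1,
player 0 plays `f` of the current (last) vertex. -/
def ConsPositional (f : V → List V) (ρ : ℕ → V) : Prop :=
  ∃ c : ℕ → ℕ, 1 ≤ c 0 ∧ ∀ i,
    pref ρ (c i + (f (ρ (c i - 1))).length) = pref ρ (c i) ++ f (ρ (c i - 1)) ∧
    c i + (f (ρ (c i - 1))).length < c (i + 1)

def PositionalWinning (E : V → V → Prop) (v₀ : V) (W : Set (ℕ → V)) (f : V → List V) : Prop :=
  IsPositional E f ∧ ∀ ρ, IsPlay E v₀ ρ → ConsPositional f ρ → ρ ∈ W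

/-- Structural requirement shared by move-counting and length-counting strategies:
for `n ≥ 1`, `h v n` is a nonempty block forming a path from `v`. -/
def IsCountingStrategy (E : V → V → Prop) (h : V → ℕ → List V) : Prop :=
  ∀ v n, 1 ≤ n → h v n ≠ [] ∧ (v :: h v n).Chain' E

/-- Consistency with a move-counting strategy: at its `i`-th move (`i ≥ 1`) player 0 plays
`h (current vertex) i`. -/
def ConsMoveCounting (h : V → ℕ → List V) (ρ : ℕ → V) : Prop :=
  ∃ c : ℕ → ℕ, 1 ≤ c 0 ∧ ∀ i,
    pref ρ (c i + (h (ρ (c i - 1)) (i + 1)).length) = pref ρ (c i) ++ h (ρ (c i - 1)) (i + 1) ∧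
    c i + (h (ρ (c i - 1)) (i + 1)).length < c (i + 1)

def MoveCountingWinning (E : V → V → Prop) (v₀ : V) (W : Set (ℕ → V))
    (h : V → ℕ → List V) : Prop :=
  IsCountingStrategy E h ∧ ∀ ρ, IsPlay E v₀ ρ → ConsMoveCounting h ρ → ρ ∈ W

/-- Consistency with a length-counting strategy: after a prefix of length `c i`
player 0 plays `h (current vertex) (c i)`. -/
def ConsLengthCounting (h : V → ℕ → List V) (ρ : ℕ → V) : Prop :=
  ∃ c : ℕ → ℕ, 1 ≤ c 0 ∧ ∀ i,
    pref ρ (c i + (h (ρ (c i - 1)) (c i)).length) = pref ρ (c i) ++ h (ρ (c i - 1)) (c i) ∧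
    c i + (h (ρ (c i - 1)) (c i)).length < c (i + 1)

def LengthCountingWinning (E : V → V → Prop) (v₀ : V) (W : Set (ℕ → V))
    (h : V → ℕ → List V) : Prop :=
  IsCountingStrategy E h ∧ ∀ ρ, IsPlay E v₀ ρ → ConsLengthCounting h ρ → ρ ∈ W

/-- The segment `ρ a, ρ (a+1), …, ρ (b-1)` of an infinite sequence. -/
def seg (ρ : ℕ → V) (a b : ℕ) : List V := (List.range (b - a)).map fun j => ρ (a + j)

/-- A last-move strategy is defined on all nonempty finite paths of the graph. -/
def IsLastMove (E : V → V → Prop) (g : List V → List V) : Prop :=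
  ∀ π, π ≠ [] → π.Chain' E → g π ≠ [] ∧ (π ++ g π).Chain' E

/-- Consistency with the last-move strategy `g`: the play decomposes as
`π₁ g(π₁) π₂ g(π₂) ⋯` where the `πᵢ` are the (nonempty) moves of player 1. -/
def ConsLastMove (g : List V → List V) (ρ : ℕ → V) : Prop :=
  ∃ s e : ℕ → ℕ, s 0 = 0 ∧ (∀ i, s i < e i) ∧ ∀ i,
    seg ρ (e i) (e i + (g (seg ρ (s i) (e i))).length) = g (seg ρ (s i) (e i)) ∧
    s (i + 1) = e i + (g (seg ρ (s i) (e i))).length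

def LastMoveWinning (E : V → V → Prop) (v₀ : V) (W : Set (ℕ → V)) (g : List V → List V) : Prop :=
  IsLastMove E g ∧ ∀ ρ, IsPlay E v₀ ρ → ConsLastMove g ρ → ρ ∈ W

/-- The cylinder generated by the finite word `π`. -/
def Cyl (π : List V) : Set (ℕ → V) := {ρ | pref ρ π.length = π}

/-- One-step transition probabilities obtained from the weights `w`. -/
noncomputable def transP [Fintype V] (E : V → V → Prop) (w : V → V → ℝ≥0) (u v : V) : ℝ≥0∞ := by
  classical
  exact if E u v then
    (w u v : ℝ≥0∞) / ∑ x ∈ Finset.univ.filter (fun x => E u x), (w u x : ℝ≥0∞)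
  else 0

/-- The probability of the cylinder generated by a finite word: the product of the
one-step transition probabilities along it. -/
noncomputable def pathP [Fintype V] (E : V → V → Prop) (w : V → V → ℝ≥0) (π : List V) : ℝ≥0∞ :=
  ((π.zip π.tail).map fun q => transP E w q.1 q.2).prod

/-- `P` is the reasonable probability measure associated with the weights `w`. -/
def IsReasonable [Fintype V] [MeasurableSpace (ℕ → V)] (E : V → V → Prop) (v₀ : V)
    (w : V → V → ℝ≥0) (P : Measure (ℕ → V)) : Prop :=
  IsProbabilityMeasure P ∧ ∀ π : List V, π.head? = some v₀ → P (Cyl π) = pathP E w π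

/-- `Ps` is a legal move of player 0 in the generalised game `G_α` at position `π`: a
finite nonempty set of nonempty finite paths from the last vertex of `π` whose union of
cylinders has conditional probability at least `α` given `Cyl π`. -/
def LegalProposal [MeasurableSpace (ℕ → V)] (E : V → V → Prop) (P : Measure (ℕ → V)) (α : ℝ)
    (π : List V) (Ps : Finset (List V)) : Prop :=
  Ps.Nonempty ∧ (∀ τ ∈ Ps, τ ≠ [] ∧ (π ++ τ).Chain' E) ∧
    ENNReal.ofReal α ≤ P (⋃ τ ∈ Ps, Cyl (π ++ τ)) / P (Cyl π)

/-- An α-strategy for player 0. -/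
def IsAlphaStrategy [MeasurableSpace (ℕ → V)] (E : V → V → Prop) (v₀ : V) (P : Measure (ℕ → V))
    (α : ℝ) (f : List V → Finset (List V)) : Prop :=
  ∀ π, IsPos E v₀ π → LegalProposal E P α π (f π)

/-- Consistency with an α-strategy: at each stage, player 1 picks some element of the
set proposed by player 0 and appends a nonempty block after it. -/
def ConsAlpha (f : List V → Finset (List V)) (ρ : ℕ → V) : Prop :=
  ∃ c : ℕ → ℕ, 1 ≤ c 0 ∧ ∀ i, ∃ τ ∈ f (pref ρ (c i)),
    pref ρ (c i + τ.length) = pref ρ (c i) ++ τ ∧ c i + τ.length < c (i + 1)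

def AlphaWinning [MeasurableSpace (ℕ → V)] (E : V → V → Prop) (v₀ : V) (P : Measure (ℕ → V))
    (α : ℝ) (W : Set (ℕ → V)) (f : List V → Finset (List V)) : Prop :=
  IsAlphaStrategy E v₀ P α f ∧ ∀ ρ, IsPlay E v₀ ρ → ConsAlpha f ρ → ρ ∈ W

/-- A strategy for player 1 in the generalised game `G_α` consists of an initial path and,
for each position together with a legal proposal of player 0, the selected element of the
proposal and the next (nonempty) block played by player 1. -/
def IsP1Strategy [MeasurableSpace (ℕ → V)] (E : V → V → Prop) (v₀ : V) (P : Measure (ℕ → V))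
    (α : ℝ) (init : List V) (g : List V → Finset (List V) → List V × List V) : Prop :=
  IsPos E v₀ init ∧
    ∀ π Ps, IsPos E v₀ π → LegalProposal E P α π Ps →
      (g π Ps).1 ∈ Ps ∧ (g π Ps).2 ≠ [] ∧ (π ++ ((g π Ps).1 ++ (g π Ps).2)).Chain' E

/-- Consistency of a play with player 1's strategy `(init, g)`:
there is a sequence of legal proposals of player 0 generating the play. -/
def ConsP1 [MeasurableSpace (ℕ → V)] (E : V → V → Prop) (P : Measure (ℕ → V)) (α : ℝ)
    (init : List V) (g : List V → Finset (List V) → List V × List V) (ρ : ℕ → V) : Prop :=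
  ∃ (Ps : ℕ → Finset (List V)) (p : ℕ → List V), p 0 = init ∧
    (∀ n, pref ρ (p n).length = p n) ∧
    ∀ n, LegalProposal E P α (p n) (Ps n) ∧
      p (n + 1) = p n ++ ((g (p n) (Ps n)).1 ++ (g (p n) (Ps n)).2)

def P1Winning [MeasurableSpace (ℕ → V)] (E : V → V → Prop) (v₀ : V) (P : Measure (ℕ → V))
    (α : ℝ) (W : Set (ℕ → V)) (init : List V)
    (g : List V → Finset (List V) → List V × List V) : Prop :=
  IsP1Strategy E v₀ P α init g ∧ ∀ ρ, IsPlay E v₀ ρ → ConsP1 E P α init g ρ → ρ ∉ W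

/-- A union of cylinders, i.e. an open subset of the space of sequences. -/
def IsCylOpen (U : Set (ℕ → V)) : Prop :=
  ∃ S : Set (List V), U = ⋃ π ∈ S, Cyl π

/-- `W` is a countable intersection of open subsets of the space `Paths (G, v₀)`. -/
def IsCountableInterOfOpens (E : V → V → Prop) (v₀ : V) (W : Set (ℕ → V)) : Prop :=
  ∃ U : ℕ → Set (ℕ → V), (∀ n, IsCylOpen (U n)) ∧
    W = {ρ | IsPlay E v₀ ρ} ∩ ⋂ n, U n

/-- For every `n`, the concatenation of the blocks `u 0, …, u (n-1)` is a prefix of `ρ`. -/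
def AgreesWithBlocks (ρ : ℕ → V) (u : ℕ → List V) : Prop :=
  ∀ n, pref ρ (((List.range n).map u).flatten).length = ((List.range n).map u).flatten

end BMGame

open BMGame

/-- The complete directed graph on `{0,1}` (all edges, including self-loops). -/
def E2 : Fin 2 → Fin 2 → Prop := fun _ _ => True

/-!
Player 0 wins with one letter per move by always playing the letter that `ρt` does not
have at the current position. A move-counting strategy `h`, on the other hand, answers its
`i`-th move from vertex `0` with the fixed word `h 0 i`. Since every word occurs in `ρt` at
arbitrarily late positions, Player 1 can follow `ρt` and, before the `i`-th move, stop right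
after an occurrence of `0` that `ρt` continues with `h 0 i`; then `ρt` itself is a play
consistent with `h` that Player 0 was supposed to avoid.
-/

namespace BMGame

variable {V : Type*}

def IsDisjunctive (ρ : ℕ → V) : Prop :=
  ∀ (w : List V) (m : ℕ), ∃ p, m ≤ p ∧ pref ρ (p + w.length) = pref ρ p ++ w

section Prefix

variable (ρ : ℕ → V)

@[simp]
lemma length_pref (n : ℕ) : (pref ρ n).length = n := by
  simp [pref]

lemma pref_succ (n : ℕ) : pref ρ (n + 1) = pref ρ n ++ [ρ n] := by
  simp [pref, List.range_succ]

lemma take_pref {a b : ℕ} (h : a ≤ b) : (pref ρ b).take a = pref ρ a := by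
  simp [pref, ← List.map_take, List.take_range, Nat.min_eq_left h]

variable {ρ}

lemma pref_length_eq_of_pref_append {u w : List V}
    (h : pref ρ (u ++ w).length = u ++ w) : pref ρ u.length = u := by
  have := congrArg (List.take u.length) h
  rwa [take_pref ρ (by simp), List.take_left] at this

lemma apply_eq_of_pref_succ {n : ℕ} {v : V} (h : pref ρ (n + 1) = pref ρ n ++ [v]) :
    ρ n = v := by
  simpa [pref_succ] using h

end Prefix

lemma isDisjunctive_of_agreesWithBlocks {ρ : ℕ → V} {e : ℕ → List V}
    (he_surj : ∀ l : List V, l ≠ [] → ∃ n, e n = l) (hρ : AgreesWithBlocks ρ e) :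
    IsDisjunctive ρ := by
  intro w m
  -- the padding in front of `w` pushes its occurrence beyond `m`
  obtain ⟨n, hn⟩ := he_surj (List.replicate (m + 1) (ρ 0) ++ w) (by simp)
  set u := ((List.range n).map e).flatten ++ List.replicate (m + 1) (ρ 0)
  have hu : pref ρ (u ++ w).length = u ++ w := by
    simpa [u, List.range_succ, hn] using hρ (n + 1)
  refine ⟨u.length, by simp [u]; omega, ?_⟩
  rw [← List.length_append, hu, pref_length_eq_of_pref_append hu]

lemma IsDisjunctive.exists_cut {ρ : ℕ → V} (hρ : IsDisjunctive ρ) (v : V) (w : List V)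
    (m : ℕ) : ∃ c, m < c ∧ ρ (c - 1) = v ∧ pref ρ (c + w.length) = pref ρ c ++ w := by
  obtain ⟨p, hmp, hp⟩ := hρ (v :: w) m
  have hu : pref ρ (pref ρ p ++ [v] ++ w).length = pref ρ p ++ [v] ++ w := by
    simpa [Nat.add_assoc, Nat.add_comm 1] using hp
  have hv := pref_length_eq_of_pref_append hu
  simp only [List.length_append, length_pref, List.length_singleton] at hu hv
  refine ⟨p + 1, by omega, apply_eq_of_pref_succ hv, ?_⟩
  rw [hu, hv]

lemma IsDisjunctive.consMoveCounting {ρ : ℕ → V} (hρ : IsDisjunctive ρ)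
    (h : V → ℕ → List V) : ConsMoveCounting h ρ := by
  choose cut hcut_gt hcut_last hcut_pref using hρ.exists_cut (ρ 0)
  let c : ℕ → ℕ := fun i =>
    Nat.rec (cut (h (ρ 0) 1) 0)
      (fun i ci => cut (h (ρ 0) (i + 2)) (ci + (h (ρ 0) (i + 1)).length)) i
  have hc_last : ∀ i, ρ (c i - 1) = ρ 0 := by
    rintro (_ | i) <;> exact hcut_last _ _
  refine ⟨c, hcut_gt _ _, fun i => ?_⟩
  rw [hc_last]
  refine ⟨?_, hcut_gt _ _⟩
  cases i <;> exact hcut_pref _ _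

def deviate (flip : V → V) (σ : ℕ → V) (π : List V) : List V := [flip (σ π.length)]

lemma ne_of_consGen_deviate {flip : V → V} (hflip : ∀ a, flip a ≠ a) {σ ρ : ℕ → V}
    (hρ : ConsGen (deviate flip σ) ρ) : ρ ≠ σ := by
  obtain ⟨c, -, hc⟩ := hρ
  have hdev : ρ (c 0) = flip (σ (c 0)) := by
    simpa [deviate] using apply_eq_of_pref_succ (hc 0).1
  rintro rfl
  exact hflip _ hdev.symm

end BMGame

theorem stmt2_general (e : ℕ → List (Fin 2))
    (he_surj : ∀ l : List (Fin 2), l ≠ [] → ∃ n, e n = l)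
    (he0 : e 0 = [0]) (ρt : ℕ → Fin 2) (hρt : AgreesWithBlocks ρt e) :
    (∃ f : List (Fin 2) → List (Fin 2),
        WinningStrategy E2 0 {σ | σ 0 = 0 ∧ σ ≠ ρt} f ∧ BoundedBy E2 0 1 f) ∧
    ¬ ∃ h : Fin 2 → ℕ → List (Fin 2), MoveCountingWinning E2 0 {σ | σ 0 = 0 ∧ σ ≠ ρt} h := by
  refine ⟨⟨deviate (· + 1) ρt, ⟨fun _ _ => ⟨?_, ?_⟩, ?_⟩, fun _ _ => by simp [deviate]⟩, ?_⟩
  · simp [deviate]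
  · exact (List.pairwise_of_forall fun _ _ => trivial).isChain
  · exact fun ρ hplay hcons => ⟨hplay.1, ne_of_consGen_deviate (by decide) hcons⟩
  · rintro ⟨h, -, hwin⟩
    have hρt0 : ρt 0 = 0 := by simpa [AgreesWithBlocks, pref, he0] using hρt 1
    have hcons := (isDisjunctive_of_agreesWithBlocks he_surj hρt).consMoveCounting h
    exact (hwin ρt ⟨hρt0, fun _ => trivial⟩ hcons).2 rfl

/-- For any enumeration `e` of the nonempty finite words over `{0,1}` with `e 0 = [0]`,
and `ρt` the concatenation `e 0 · e 1 · e 2 ⋯`, in the game whose winning condition is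
the set of sequences starting with `0` other than `ρt`, Player 0 has a `1`-bounded
winning strategy but no move-counting winning strategy. -/
theorem stmt2 (e : ℕ → List (Fin 2)) (he_inj : Function.Injective e)
    (he_ne : ∀ n, e n ≠ []) (he_surj : ∀ l : List (Fin 2), l ≠ [] → ∃ n, e n = l)
    (he0 : e 0 = [0]) (ρt : ℕ → Fin 2) (hρt : AgreesWithBlocks ρt e) :
    (∃ f : List (Fin 2) → List (Fin 2),
        WinningStrategy E2 0 {σ | σ 0 = 0 ∧ σ ≠ ρt} f ∧ BoundedBy E2 0 1 f) ∧
    ¬ ∃ h : Fin 2 → ℕ → List (Fin 2), MoveCountingWinning E2 0 {σ | σ 0 = 0 ∧ σ ≠ ρt} h :=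
  stmt2_general e he_surj he0 ρt hρt
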